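/- For every η ∈ ℂ, the element ad − bc is central for the η-family bracket on P̃: {θⁱ, ad − bc}_η = 0 for i = 0, 1, 2. -/
import Mathlib


open scoped TensorProduct

noncomputable section
set_option synthInstance.maxHeartbeats 1000000
set_option maxHeartbeats 1000000

/-- The polynomial ring `P = ℂ[a,b,c,d]`. -/
abbrev P : Type := MvPolynomial (Fin 4) ℂ

def aP : P := MvPolynomial.X 0
def bP : P := MvPolynomial.X 1
def cP : P := MvPolynomial.X 2
def dP : P := MvPolynomial.X 3

/-- `P̃ = ℂ[a,b,c,d] ⊗ Λ(θ⁰,θ¹,θ²)`, realized as the exterior algebra over `P` on a free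
module of rank 3. -/
abbrev Pt : Type := ExteriorAlgebra P (Fin 3 → P)

/-- The odd generators `θ⁰, θ¹, θ²`. -/
def θ (i : Fin 3) : Pt := ExteriorAlgebra.ι P (Pi.single i 1)

/-- The canonical inclusion of `P` into `P̃`. -/
def CP : P → Pt := algebraMap P Pt

def aM : Pt := CP aP
def bM : Pt := CP bP
def cM : Pt := CP cP
def dM : Pt := CP dP

/-- The even part of `P̃`. -/
def Geven : Submodule P Pt := Submodule.span P {1, θ 0 * θ 1, θ 0 * θ 2, θ 1 * θ 2}

/-- The odd part of `P̃`. -/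
def Godd : Submodule P Pt := Submodule.span P {θ 0, θ 1, θ 2, θ 0 * θ 1 * θ 2}

/-- The homogeneous component of `P̃` of parity `p`. -/
def homM : ℕ → Submodule P Pt := fun p => if p % 2 = 0 then Geven else Godd

/-- `Br` is a ℤ₂-graded bilinear bracket on `P̃`: ℂ-bilinear, grading-respecting, with
graded symmetry and the graded Leibniz rule. -/
def IsGradedBracket (Br : Pt → Pt → Pt) : Prop :=
  (∀ x y z : Pt, Br (x + y) z = Br x z + Br y z) ∧
  (∀ x y z : Pt, Br x (y + z) = Br x y + Br x z) ∧
  (∀ (t : ℂ) (x y : Pt), Br (t • x) y = t • Br x y) ∧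
  (∀ (t : ℂ) (x y : Pt), Br x (t • y) = t • Br x y) ∧
  (∀ (p q : ℕ) (x y : Pt), x ∈ homM p → y ∈ homM q → Br x y ∈ homM (p + q)) ∧
  (∀ (p q : ℕ) (x y : Pt), x ∈ homM p → y ∈ homM q →
    Br x y = ((-1 : ℂ)) ^ (p * q + 1) • Br y x) ∧
  (∀ (q r : ℕ) (x y z : Pt), y ∈ homM q → z ∈ homM r →
    Br (x * y) z = x * Br y z + ((-1 : ℂ)) ^ (q * r) • (Br x z * y))

/-- The Sklyanin values on the even generators. -/
def SklValsM (Br : Pt → Pt → Pt) : Prop :=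
  Br aM bM = -(aM * bM) ∧ Br aM cM = -(aM * cM) ∧ Br bM dM = -(bM * dM) ∧
  Br cM dM = -(cM * dM) ∧ Br cM bM = 0 ∧ Br aM dM = -(2 * (bM * cM))

/-- The `η`-family values `{θⁱ, t}_η` of the Appendix. -/
def EtaVals (η : ℂ) (Br : Pt → Pt → Pt) : Prop :=
  Br (θ 0) aM = η • (cM * θ 1) ∧
  Br (θ 1) aM = -((1 + η) • (aM * θ 1)) ∧
  Br (θ 2) aM = -((2 * η) • (cM * θ 0)) + (1 + η) • (aM * θ 2) ∧
  Br (θ 0) bM = η • (dM * θ 1) ∧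
  Br (θ 1) bM = -((1 + η) • (bM * θ 1)) ∧
  Br (θ 2) bM = -((2 * η) • (dM * θ 0)) + (1 + η) • (bM * θ 2) ∧
  Br (θ 0) cM = -((2 + η) • (aM * θ 2)) ∧
  Br (θ 1) cM = (4 + 2 * η) • (aM * θ 0) + (1 + η) • (cM * θ 1) ∧
  Br (θ 2) cM = -((1 + η) • (cM * θ 2)) ∧
  Br (θ 0) dM = -((2 + η) • (bM * θ 2)) ∧
  Br (θ 1) dM = (4 + 2 * η) • (bM * θ 0) + (1 + η) • (dM * θ 1) ∧
  Br (θ 2) dM = -((1 + η) • (dM * θ 2))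

/-- For every `η ∈ ℂ`, the element `ad − bc` is central for the
`η`-family bracket on `P̃`: `{θⁱ, ad − bc}_η = 0` for `i = 0, 1, 2`. -/
theorem etaFamily_det_central :
    ∀ η : ℂ, ∀ Br : Pt → Pt → Pt,
      IsGradedBracket Br → SklValsM Br → EtaVals η Br →
      ∀ i : Fin 3, Br (θ i) (CP (aP * dP - bP * cP)) = 0 := by
  intro η Br hB _hS hE i
  obtain ⟨_, hadd2, _, hs2, _, hsym, hleib⟩ := hB
  have memE : ∀ p : P, CP p ∈ homM 0 := by
    intro p
    have h1 : (1 : Pt) ∈ Geven := Submodule.subset_span (by simp)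
    have h2 := Submodule.smul_mem Geven p h1
    simpa [homM, CP, Algebra.algebraMap_eq_smul_one] using h2
  have memO : ∀ j : Fin 3, θ j ∈ homM 1 := by
    intro j
    have h : θ j ∈ ({θ 0, θ 1, θ 2, θ 0 * θ 1 * θ 2} : Set Pt) := by
      fin_cases j <;> simp
    simpa [homM, Godd] using Submodule.subset_span h
  have hflip : ∀ p : P, Br (CP p) (θ i) = - Br (θ i) (CP p) := by
    intro p
    have h := hsym 0 1 (CP p) (θ i) (memE p) (memO i)
    simpa using h
  have haux : ∀ u v : P, Br (θ i) (CP (u * v))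
      = CP u * Br (θ i) (CP v) + Br (θ i) (CP u) * CP v := by
    intro u v
    have h2 : CP (u * v) = CP u * CP v := by simp [CP, map_mul]
    have h1 := hsym 1 0 (θ i) (CP (u * v)) (memO i) (memE _)
    have h3 := hleib 0 1 (CP u) (CP v) (θ i) (memE v) (memO i)
    rw [h1, h2, h3, hflip u, hflip v]
    simp [mul_neg, neg_mul]
  have hsub : Br (θ i) (CP (aP * dP - bP * cP))
      = Br (θ i) (CP (aP * dP)) - Br (θ i) (CP (bP * cP)) := by
    have h : CP (aP * dP - bP * cP) = CP (aP * dP) + (-1 : ℂ) • CP (bP * cP) := by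
      simp [CP, map_sub, sub_eq_add_neg]
    rw [h, hadd2, hs2]
    simp [sub_eq_add_neg]
  have hm : ∀ (p : P) (x : Pt), CP p * x = p • x := fun p x => (Algebra.smul_def p x).symm
  have hc : ∀ (p : P) (x : Pt), x * CP p = p • x := by
    intro p x
    rw [CP, ← Algebra.commutes, ← Algebra.smul_def]
  rw [hsub, haux aP dP, haux bP cP]
  have ea : CP aP = aM := rfl
  have eb : CP bP = bM := rfl
  have ec : CP cP = cM := rfl
  have ed : CP dP = dM := rfl
  rw [ea, eb, ec, ed]
  obtain ⟨h0a, h1a, h2a, h0b, h1b, h2b, h0c, h1c, h2c, h0d, h1d, h2d⟩ := hE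
  fin_cases i
  · rw [show θ (⟨0, by norm_num⟩ : Fin 3) = θ 0 from rfl, h0d, h0a, h0c, h0b]
    simp only [aM, bM, cM, dM, hm, hc, mul_neg, neg_mul, mul_smul_comm, smul_mul_assoc,
      smul_neg, smul_smul]
    module
  · rw [show θ (⟨1, by norm_num⟩ : Fin 3) = θ 1 from rfl, h1d, h1a, h1c, h1b]
    simp only [aM, bM, cM, dM, hm, hc, mul_neg, neg_mul, mul_add, add_mul, mul_smul_comm,
      smul_mul_assoc, smul_neg, smul_smul]
    module
  · rw [show θ (⟨2, by norm_num⟩ : Fin 3) = θ 2 from rfl, h2d, h2a, h2c, h2b]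
    simp only [aM, bM, cM, dM, hm, hc, mul_neg, neg_mul, mul_add, add_mul, mul_smul_comm,
      smul_mul_assoc, smul_neg, smul_smul]
    module
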